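/- (Correctness of normalization rule NF9.) Let B and D̂ be ALC concepts, r a role name, and A a concept name occurring neither in B nor in D̂. (i) Every crisp interpretation J satisfying both A ⊑ D̂ and B ⊑ ∀r.A also satisfies B ⊑ ∀r.D̂. (ii) For every crisp interpretation I satisfying B ⊑ ∀r.D̂ there exists a crisp interpretation J with the same domain, interpreting every concept name other than A and every role name the same as I, that satisfies both A ⊑ D̂ and B ⊑ ∀r.A. -/
import Mathlib


/-- ALC concepts over concept names `NC` and role names `NR`. -/
inductive ALCConcept (NC NR : Type) : Type
  | top : ALCConcept NC NR
  | bot : ALCConcept NC NR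
  | atom (A : NC) : ALCConcept NC NR
  | neg (C : ALCConcept NC NR) : ALCConcept NC NR
  | conj (C D : ALCConcept NC NR) : ALCConcept NC NR
  | disj (C D : ALCConcept NC NR) : ALCConcept NC NR
  | ex (r : NR) (C : ALCConcept NC NR) : ALCConcept NC NR
  | all (r : NR) (C : ALCConcept NC NR) : ALCConcept NC NR

namespace ALCConcept

/-- The set of concept names occurring in a concept. -/
def conceptNames {NC NR : Type} : ALCConcept NC NR → Set NC
  | top => ∅
  | bot => ∅
  | atom A => {A}
  | neg C => C.conceptNames
  | conj C D => C.conceptNames ∪ D.conceptNames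
  | disj C D => C.conceptNames ∪ D.conceptNames
  | ex _ C => C.conceptNames
  | all _ C => C.conceptNames

/-- The set of role names occurring in a concept. -/
def roleNames {NC NR : Type} : ALCConcept NC NR → Set NR
  | top => ∅
  | bot => ∅
  | atom _ => ∅
  | neg C => C.roleNames
  | conj C D => C.roleNames ∪ D.roleNames
  | disj C D => C.roleNames ∪ D.roleNames
  | ex r C => insert r C.roleNames
  | all r C => insert r C.roleNames

end ALCConcept

/-- A crisp interpretation with domain `Δ`. -/
structure Interp (NC NR Δ : Type) : Type where
  atom : NC → Set Δ
  role : NR → Set (Δ × Δ)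

/-- Extension of a crisp interpretation to all ALC concepts. -/
def Interp.eval {NC NR Δ : Type} (I : Interp NC NR Δ) : ALCConcept NC NR → Set Δ
  | .top => Set.univ
  | .bot => ∅
  | .atom A => I.atom A
  | .neg C => (I.eval C)ᶜ
  | .conj C D => I.eval C ∩ I.eval D
  | .disj C D => I.eval C ∪ I.eval D
  | .ex r C => {a | ∃ b, (a, b) ∈ I.role r ∧ b ∈ I.eval C}
  | .all r C => {a | ∀ b, (a, b) ∈ I.role r → b ∈ I.eval C}

/-- The concept inclusion `C ⊑ D` is true in (satisfied by) `I`. -/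
def Interp.satInclusion {NC NR Δ : Type} (I : Interp NC NR Δ)
    (C D : ALCConcept NC NR) : Prop :=
  I.eval C ⊆ I.eval D


theorem eval_congr {NC NR Δ : Type} (I J : Interp NC NR Δ)
    (hr : ∀ s : NR, J.role s = I.role s) :
    ∀ C : ALCConcept NC NR, (∀ A ∈ C.conceptNames, J.atom A = I.atom A) →
      J.eval C = I.eval C := by
  intro C
  induction C with
  | top => intro _; rfl
  | bot => intro _; rfl
  | atom A => intro h; exact h A rfl
  | neg C ih => intro h; simp only [Interp.eval, ih h]
  | conj C D ihC ihD =>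
      intro h
      simp only [Interp.eval,
        ihC (fun A hA => h A (Or.inl hA)), ihD (fun A hA => h A (Or.inr hA))]
  | disj C D ihC ihD =>
      intro h
      simp only [Interp.eval,
        ihC (fun A hA => h A (Or.inl hA)), ihD (fun A hA => h A (Or.inr hA))]
  | ex s C ih => intro h; simp only [Interp.eval, ih h, hr]
  | all s C ih => intro h; simp only [Interp.eval, ih h, hr]

/-- correctness of normalization rule NF9,
`B ⊑ ∀r.D̂  ⇒  A ⊑ D̂, B ⊑ ∀r.A` with `A` fresh. -/
theorem nf9_correct {NC NR Δ : Type} [Nonempty Δ]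
    (B Dh : ALCConcept NC NR) (r : NR) (A : NC)
    (hB : A ∉ B.conceptNames) (hD : A ∉ Dh.conceptNames) :
    (∀ J : Interp NC NR Δ,
        J.satInclusion (.atom A) Dh → J.satInclusion B (.all r (.atom A)) →
          J.satInclusion B (.all r Dh)) ∧
    (∀ I : Interp NC NR Δ, I.satInclusion B (.all r Dh) →
        ∃ J : Interp NC NR Δ,
          (∀ B' : NC, B' ≠ A → J.atom B' = I.atom B') ∧
          (∀ s : NR, J.role s = I.role s) ∧
          J.satInclusion (.atom A) Dh ∧ J.satInclusion B (.all r (.atom A))) := by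
  constructor
  · intro J h1 h2 x hx b hrb
    exact h1 (h2 hx b hrb)
  · intro I hI
    classical
    set J : Interp NC NR Δ :=
      ⟨fun B' => if B' = A then I.eval Dh else I.atom B', I.role⟩ with hJ
    have hDh : J.eval Dh = I.eval Dh :=
      eval_congr I J (fun _ => rfl) Dh (fun A' hA' => by
        have : A' ≠ A := fun h => hD (h ▸ hA')
        simp [hJ, this])
    have hBeq : J.eval B = I.eval B :=
      eval_congr I J (fun _ => rfl) B (fun A' hA' => by
        have : A' ≠ A := fun h => hB (h ▸ hA')
        simp [hJ, this])
    refine ⟨J, fun B' hB' => by simp [hJ, hB'], fun s => rfl, ?_, ?_⟩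
    · intro x hx
      rw [hDh]
      simpa [hJ, Interp.eval] using hx
    · intro x hx b hrb
      rw [hBeq] at hx
      simp only [hJ, Interp.eval, Set.mem_setOf_eq, if_pos rfl]
      exact hI hx b hrb
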